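/- For m = 0, 1, 2, 3 let L_m := (1/2)P(φ_{m+1}) + P(φ_{m+2}) + (1/2)P(φ_{m+3}) and B_m := (1/2)P(φ_m) + P(φ_{m+1}) + (3/2)P(φ_{m+2}) + P(φ_{m+3}) (indices mod 4). Then for any 2×2 complex matrices W₀, W₁, W₂, W₃, the traces Σ_{m=0}^{3} tr(W_m L_m W_m†) and Σ_{m=0}^{3} tr(W_m B_m W_m†) are real and nonnegative, and Σ_{m=0}^{3} tr(W_m L_m W_m†) ≥ (1/3)·Σ_{m=0}^{3} tr(W_m B_m W_m†). Hence any POVM intercept-and-resend attack by Eve on single-photon SARG04 that resends SARG04 states induces a bit error rate of at least 1/3. -/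
import Mathlib


open Matrix Real
open scoped ComplexOrder

noncomputable section

/-- Standard basis vector `e₀` of `ℂ²`. -/
def e0 : Fin 2 → ℂ := ![1, 0]
/-- Standard basis vector `e₁` of `ℂ²`. -/
def e1 : Fin 2 → ℂ := ![0, 1]

/-- `P(v) = v v†`, the rank-one matrix associated with `v ∈ ℂ²`. -/
def P (v : Fin 2 → ℂ) : Matrix (Fin 2) (Fin 2) ℂ := vecMulVec v (star v)

/-- The rotation `R = cos(π/4)·I + sin(π/4)·(e₁e₀† - e₀e₁†)`. -/
def Rrot : Matrix (Fin 2) (Fin 2) ℂ :=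
  (Real.cos (π / 4) : ℂ) • 1 +
    (Real.sin (π / 4) : ℂ) • (vecMulVec e1 (star e0) - vecMulVec e0 (star e1))

/-- The SARG04 states `φ_m = R^{-m} φ₀` with `φ₀ = cos(π/8) e₀ + sin(π/8) e₁`,
indices effectively taken modulo 4. -/
def φ (m : ℤ) : Fin 2 → ℂ :=
  (Rrot ^ (-m)).mulVec ((Real.cos (π / 8) : ℂ) • e0 + (Real.sin (π / 8) : ℂ) • e1)
/-- `L_m` for the single-photon SARG04 intercept-and-resend analysis (indices mod 4). -/
def Lm (m : ℤ) : Matrix (Fin 2) (Fin 2) ℂ :=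
  ((1 : ℂ) / 2) • P (φ (m + 1)) + P (φ (m + 2)) + ((1 : ℂ) / 2) • P (φ (m + 3))

/-- `B_m` for the single-photon SARG04 intercept-and-resend analysis (indices mod 4). -/
def Bm (m : ℤ) : Matrix (Fin 2) (Fin 2) ℂ :=
  ((1 : ℂ) / 2) • P (φ m) + P (φ (m + 1)) + ((3 : ℂ) / 2) • P (φ (m + 2)) + P (φ (m + 3))

def Rinv : Matrix (Fin 2) (Fin 2) ℂ :=
  !![(Real.cos (π / 4) : ℂ), (Real.sin (π / 4) : ℂ);
     -(Real.sin (π / 4) : ℂ), (Real.cos (π / 4) : ℂ)]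
lemma Rrot_eq : Rrot = !![(Real.cos (π / 4) : ℂ), -(Real.sin (π / 4) : ℂ);
    (Real.sin (π / 4) : ℂ), (Real.cos (π / 4) : ℂ)] := by
  ext i j
  fin_cases i <;> fin_cases j <;>
    simp [Rrot, e0, e1, vecMulVec, Matrix.one_apply]
lemma cs4 : ((Real.cos (π / 4) : ℂ))^2 + ((Real.sin (π / 4) : ℂ))^2 = 1 := by
  have := Real.cos_sq_add_sin_sq (π / 4)
  exact_mod_cast congrArg (fun r : ℝ => (r : ℂ)) this
lemma hC : (Real.cos (π / 4) : ℂ) = (Real.sqrt 2 : ℂ) / 2 := by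
  rw [Real.cos_pi_div_four]; push_cast; ring
lemma hS : (Real.sin (π / 4) : ℂ) = (Real.sqrt 2 : ℂ) / 2 := by
  rw [Real.sin_pi_div_four]; push_cast; ring
lemma hsq2 : ((Real.sqrt 2 : ℝ) : ℂ)^2 = 2 := by
  have : (Real.sqrt 2 : ℝ)^2 = 2 := Real.sq_sqrt (by norm_num)
  exact_mod_cast congrArg (fun r : ℝ => (r : ℂ)) this
lemma Rinv_mul_Rrot : Rinv * Rrot = 1 := by
  rw [Rrot_eq]
  ext i j
  fin_cases i <;> fin_cases j <;>
    simp only [Rinv, Matrix.mul_apply, Fin.sum_univ_two, Matrix.one_apply,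
      Matrix.cons_val', Matrix.cons_val_zero, Matrix.cons_val_one, Matrix.head_cons,
      Matrix.empty_val', Matrix.cons_val_fin_one, Matrix.head_fin_const, Matrix.of_apply,
      Fin.mk_zero, Fin.mk_one, hC, hS] <;>
    norm_num <;>
    first
      | linear_combination (1/2 : ℂ) * hsq2
      | linear_combination (-1/2 : ℂ) * hsq2
lemma Rrot_det : IsUnit Rrot.det := by
  rw [Rrot_eq]
  rw [Matrix.det_fin_two_of]
  rw [show (Real.cos (π / 4) : ℂ) * (Real.cos (π / 4) : ℂ) -
      -(Real.sin (π / 4) : ℂ) * (Real.sin (π / 4) : ℂ) = 1 by linear_combination cs4]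
  exact isUnit_one
lemma Rrot_inv : Rrot⁻¹ = Rinv := Matrix.inv_eq_left_inv Rinv_mul_Rrot
lemma cs4eq : (Real.sin (π / 4) : ℂ) = (Real.cos (π / 4) : ℂ) := by
  rw [Real.sin_pi_div_four, Real.cos_pi_div_four]
lemma Rinv_sq : Rinv * Rinv = !![0, 1; -1, 0] := by
  have h2 : ((Real.cos (π/4) : ℂ))^2 = 1/2 := by
    have := cs4; rw [cs4eq] at this; linear_combination (1/2 : ℂ) * this
  ext i j
  fin_cases i <;> fin_cases j <;>
    simp only [Rinv, Matrix.mul_apply, Fin.sum_univ_two,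
      Matrix.cons_val', Matrix.cons_val_zero, Matrix.cons_val_one, Matrix.head_cons,
      Matrix.empty_val', Matrix.cons_val_fin_one, Matrix.head_fin_const, Matrix.of_apply,
      Fin.mk_zero, Fin.mk_one, hC, hS] <;>
    norm_num <;>
    first
      | linear_combination (1/2 : ℂ) * hsq2
      | linear_combination (-1/2 : ℂ) * hsq2

lemma phi_step (k : ℤ) : φ (k + 1) = Rinv.mulVec (φ k) := by
  unfold φ
  rw [show -(k+1) = -1 + -k by ring, Matrix.zpow_add Rrot_det, Matrix.zpow_neg_one,
    Rrot_inv, ← Matrix.mulVec_mulVec]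

lemma phi_step2 (k : ℤ) : φ (k + 2) = ![φ k 1, -(φ k 0)] := by
  have h : φ (k + 2) = φ ((k + 1) + 1) := by ring_nf
  rw [h, phi_step, phi_step, Matrix.mulVec_mulVec, Rinv_sq]
  funext i
  fin_cases i <;> simp [Matrix.mulVec, dotProduct, Fin.sum_univ_two]

def RU (k : ℤ) : Prop := ∃ a b : ℝ, φ k = ![(a : ℂ), (b : ℂ)] ∧ a^2 + b^2 = 1

lemma RU_zero : RU 0 := by
  refine ⟨Real.cos (π / 8), Real.sin (π / 8), ?_, Real.cos_sq_add_sin_sq _⟩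
  unfold φ
  rw [neg_zero, zpow_zero, Matrix.one_mulVec]
  funext i
  fin_cases i <;> simp [e0, e1]

lemma RU_step (k : ℤ) (h : RU k) : RU (k + 1) := by
  obtain ⟨a, b, hv, hn⟩ := h
  refine ⟨Real.cos (π/4) * a + Real.sin (π/4) * b,
          -(Real.sin (π/4)) * a + Real.cos (π/4) * b, ?_, ?_⟩
  · rw [phi_step, hv]
    funext i
    fin_cases i <;>
      · simp [Rinv, Matrix.mulVec, dotProduct, Fin.sum_univ_two]
        try push_cast
        try ring
  · have := Real.cos_sq_add_sin_sq (π / 4)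
    nlinarith [this, hn]

lemma P_pair (k : ℤ) (h : RU k) : P (φ k) + P (φ (k + 2)) = 1 := by
  obtain ⟨a, b, hv, hn⟩ := h
  have hn' : (a:ℂ)^2 + (b:ℂ)^2 = 1 := by exact_mod_cast hn
  rw [phi_step2, hv]
  ext i j
  fin_cases i <;> fin_cases j <;>
    · simp [P, vecMulVec, Matrix.one_apply, Pi.star_apply, ← Complex.ofReal_neg]
      try push_cast
      try ring
      try linear_combination hn'
      try linear_combination -hn'

lemma trace_P_nonneg (W : Matrix (Fin 2) (Fin 2) ℂ) (v : Fin 2 → ℂ) :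
    0 ≤ (W * P v * Wᴴ).trace := by
  have h : (W * P v * Wᴴ).trace =
      (W.mulVec v 0) * star (W.mulVec v 0) + (W.mulVec v 1) * star (W.mulVec v 1) := by
    simp [Matrix.trace, Matrix.mul_apply, P, vecMulVec, Matrix.conjTranspose_apply,
      Matrix.mulVec, dotProduct, Fin.sum_univ_two]
    ring
  rw [h]
  exact add_nonneg (mul_star_self_nonneg _) (mul_star_self_nonneg _)

lemma half_nonneg : (0:ℂ) ≤ 1/2 := by
  rw [show (1/2:ℂ) = ((1/2:ℝ):ℂ) by norm_num, Complex.zero_le_real]; norm_num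

lemma trace_L (W : Matrix (Fin 2) (Fin 2) ℂ) (m : ℤ) :
    (W * Lm m * Wᴴ).trace =
      (1/2) * (W * P (φ (m+1)) * Wᴴ).trace + (W * P (φ (m+2)) * Wᴴ).trace
        + (1/2) * (W * P (φ (m+3)) * Wᴴ).trace := by
  simp [Lm, Matrix.mul_add, Matrix.add_mul, Matrix.mul_smul, Matrix.smul_mul,
    Matrix.trace_add, Matrix.trace_smul, smul_eq_mul]

lemma trace_B (W : Matrix (Fin 2) (Fin 2) ℂ) (m : ℤ) :
    (W * Bm m * Wᴴ).trace =
      (1/2) * (W * P (φ m) * Wᴴ).trace + (W * P (φ (m+1)) * Wᴴ).trace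
        + (3/2) * (W * P (φ (m+2)) * Wᴴ).trace + (W * P (φ (m+3)) * Wᴴ).trace := by
  simp [Bm, Matrix.mul_add, Matrix.add_mul, Matrix.mul_smul, Matrix.smul_mul,
    Matrix.trace_add, Matrix.trace_smul, smul_eq_mul]

lemma main_m (W : Matrix (Fin 2) (Fin 2) ℂ) (m : ℤ) (h0 : RU m) (h1 : RU (m+1)) :
    0 ≤ (W * Lm m * Wᴴ).trace ∧ 0 ≤ (W * Bm m * Wᴴ).trace ∧
      ((1:ℂ)/3) * (W * Bm m * Wᴴ).trace ≤ (W * Lm m * Wᴴ).trace := by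
  have n0 := trace_P_nonneg W (φ m)
  have n1 := trace_P_nonneg W (φ (m+1))
  have n2 := trace_P_nonneg W (φ (m+2))
  have n3 := trace_P_nonneg W (φ (m+3))
  have hsum02 : (W * P (φ m) * Wᴴ).trace + (W * P (φ (m+2)) * Wᴴ).trace
      = (W * 1 * Wᴴ).trace := by
    rw [← P_pair m h0]
    simp [Matrix.mul_add, Matrix.add_mul, Matrix.trace_add]
  have hsum13 : (W * P (φ (m+1)) * Wᴴ).trace + (W * P (φ (m+3)) * Wᴴ).trace
      = (W * 1 * Wᴴ).trace := by
    have h := P_pair (m+1) h1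
    rw [show (m+1)+2 = m+3 by ring] at h
    rw [← h]
    simp [Matrix.mul_add, Matrix.add_mul, Matrix.trace_add]
  have hrel : (W * P (φ m) * Wᴴ).trace + (W * P (φ (m+2)) * Wᴴ).trace
      = (W * P (φ (m+1)) * Wᴴ).trace + (W * P (φ (m+3)) * Wᴴ).trace := by
    rw [hsum02, hsum13]
  have hL := trace_L W m
  have hB := trace_B W m
  refine ⟨?_, ?_, ?_⟩
  · rw [hL]
    exact add_nonneg (add_nonneg (mul_nonneg half_nonneg n1) n2) (mul_nonneg half_nonneg n3)
  · rw [hB]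
    have h32 : (0:ℂ) ≤ (3/2) := by
      rw [show (3/2:ℂ) = ((3/2:ℝ):ℂ) by norm_num, Complex.zero_le_real]; norm_num
    exact add_nonneg (add_nonneg (add_nonneg (mul_nonneg half_nonneg n0) n1)
      (mul_nonneg h32 n2)) n3
  · have key : (W * Lm m * Wᴴ).trace = ((1:ℂ)/3) * (W * Bm m * Wᴴ).trace
        + (2/3) * (W * P (φ (m+2)) * Wᴴ).trace := by
      rw [hL, hB]
      linear_combination (-1/6 : ℂ) * hrel
    rw [key]
    refine le_add_of_nonneg_right (mul_nonneg ?_ n2)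
    rw [show (2/3:ℂ) = ((2/3:ℝ):ℂ) by norm_num, Complex.zero_le_real]; norm_num

/-- For any POVM intercept-and-resend attack (with matrices `W_m`) on single-photon SARG04
that resends SARG04 states, the error weight `Σ_m tr(W_m L_m W_m†)` and the total weight
`Σ_m tr(W_m B_m W_m†)` are real and nonnegative (i.e. nonnegative in the complex order),
and the induced bit error rate is at least `1/3`. -/
theorem sarg04_single_photon_general_povm_ber_ge_third
    (W : Fin 4 → Matrix (Fin 2) (Fin 2) ℂ) :
    0 ≤ ∑ m : Fin 4, (W m * Lm (m : ℤ) * (W m)ᴴ).trace ∧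
    0 ≤ ∑ m : Fin 4, (W m * Bm (m : ℤ) * (W m)ᴴ).trace ∧
    ((1 : ℂ) / 3) * ∑ m : Fin 4, (W m * Bm (m : ℤ) * (W m)ᴴ).trace
      ≤ ∑ m : Fin 4, (W m * Lm (m : ℤ) * (W m)ᴴ).trace := by
  have r0 : RU 0 := RU_zero
  have r1 : RU 1 := by have h := RU_step 0 r0; norm_num at h; exact h
  have r2 : RU 2 := by have h := RU_step 1 r1; norm_num at h; exact h
  have r3 : RU 3 := by have h := RU_step 2 r2; norm_num at h; exact h
  have r4 : RU 4 := by have h := RU_step 3 r3; norm_num at h; exact h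
  have h0 := main_m (W 0) 0 r0 (by norm_num; exact r1)
  have h1 := main_m (W 1) 1 r1 (by norm_num; exact r2)
  have h2 := main_m (W 2) 2 r2 (by norm_num; exact r3)
  have h3 := main_m (W 3) 3 r3 (by norm_num; exact r4)
  have c0 : ((0 : Fin 4) : ℤ) = 0 := rfl
  have c1 : ((1 : Fin 4) : ℤ) = 1 := rfl
  have c2 : ((2 : Fin 4) : ℤ) = 2 := rfl
  have c3 : ((3 : Fin 4) : ℤ) = 3 := rfl
  rw [Fin.sum_univ_four, Fin.sum_univ_four, c0, c1, c2, c3]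
  refine ⟨?_, ?_, ?_⟩
  · exact add_nonneg (add_nonneg (add_nonneg h0.1 h1.1) h2.1) h3.1
  · exact add_nonneg (add_nonneg (add_nonneg h0.2.1 h1.2.1) h2.2.1) h3.2.1
  · calc ((1:ℂ)/3) * ((W 0 * Bm 0 * (W 0)ᴴ).trace + (W 1 * Bm 1 * (W 1)ᴴ).trace
        + (W 2 * Bm 2 * (W 2)ᴴ).trace + (W 3 * Bm 3 * (W 3)ᴴ).trace)
        = (1/3) * (W 0 * Bm 0 * (W 0)ᴴ).trace + (1/3) * (W 1 * Bm 1 * (W 1)ᴴ).trace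
          + (1/3) * (W 2 * Bm 2 * (W 2)ᴴ).trace + (1/3) * (W 3 * Bm 3 * (W 3)ᴴ).trace := by
          ring
      _ ≤ _ := by
          refine add_le_add (add_le_add (add_le_add ?_ ?_) ?_) ?_
          exacts [h0.2.2, h1.2.2, h2.2.2, h3.2.2]

end
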